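/- Define u_t⁺(λ) = e^{2t}λ + 2e^{t}(e^{t} − 1)(√(1 + λ) + 1) for t ≥ 0, λ ≥ 0, and define φ₊(z) = −2z − 2(√(1 + z) + 1) for z ≥ 0. Then for every λ ≥ 0: u_0⁺(λ) = λ, u_t⁺(λ) ≥ 0 for all t ≥ 0, and t ↦ u_t⁺(λ) is differentiable on [0,∞) with (d/dt) u_t⁺(λ) = −φ₊(u_t⁺(λ)) for all t ≥ 0. (In particular √(1 + u_t⁺(λ)) = e^{t}√(1 + λ) + e^{t} − 1.) -/

import Mathlib

/- With `x = eᵗ` and `c = √(1 + λ) + 1`, one has `1 + u_t⁺(λ) = (x c - 1)²`, so for `t ≥ 0` the square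
root is `x c - 1`, and `-φ₊(u) = 2u + 2√(1 + u) + 2` becomes a polynomial in `x`; it coincides
with `d/dt u_t⁺(λ) = 2x²λ + 2(2x² - x)c`. -/

/-- `u_t⁺(λ) = e^{2t}λ + 2e^{t}(e^{t}-1)(√(1+λ) + 1)`. -/
noncomputable def uPlus (t lam : ℝ) : ℝ :=
  Real.exp (2 * t) * lam + 2 * Real.exp t * (Real.exp t - 1) * (Real.sqrt (1 + lam) + 1)

/-- `φ₊(z) = -2z - 2(√(1+z) + 1)`. -/
noncomputable def phiPlus (z : ℝ) : ℝ := -2 * z - 2 * (Real.sqrt (1 + z) + 1)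

open Real

lemma uPlus_zero_left (lam : ℝ) : uPlus 0 lam = lam := by
  simp [uPlus]

lemma uPlus_eq (t lam : ℝ) :
    uPlus t lam = exp t ^ 2 * lam + 2 * exp t * (exp t - 1) * (√(1 + lam) + 1) := by
  rw [uPlus, ← exp_nat_mul]
  norm_num

lemma one_add_uPlus {lam : ℝ} (hlam : -1 ≤ lam) (t : ℝ) :
    1 + uPlus t lam = (exp t * (√(1 + lam) + 1) - 1) ^ 2 := by
  have hsq : √(1 + lam) ^ 2 = 1 + lam := sq_sqrt (by linarith)
  rw [uPlus_eq]
  linear_combination (-(exp t) ^ 2) * hsq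

lemma sqrt_one_add_uPlus {lam t : ℝ} (hlam : -1 ≤ lam) (ht : 0 ≤ t) :
    √(1 + uPlus t lam) = exp t * √(1 + lam) + exp t - 1 := by
  have hx : 1 ≤ exp t := one_le_exp ht
  have hc : 1 ≤ √(1 + lam) + 1 := by linarith [sqrt_nonneg (1 + lam)]
  rw [one_add_uPlus hlam, sqrt_sq (by nlinarith)]
  ring

lemma uPlus_nonneg {lam t : ℝ} (hlam : 0 ≤ lam) (ht : 0 ≤ t) : 0 ≤ uPlus t lam := by
  have hx : 0 ≤ exp t - 1 := by linarith [one_le_exp ht]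
  have hs : 0 ≤ √(1 + lam) := sqrt_nonneg _
  rw [uPlus_eq]
  positivity

lemma hasDerivAt_uPlus (t lam : ℝ) :
    HasDerivAt (fun s => uPlus s lam)
      (2 * exp t ^ 2 * lam + 2 * (2 * exp t ^ 2 - exp t) * (√(1 + lam) + 1)) t := by
  simp only [uPlus_eq]
  have hx := hasDerivAt_exp t
  refine (((hx.pow 2).mul_const lam).add
    (((hx.const_mul 2).mul (hx.sub_const 1)).mul_const (√(1 + lam) + 1))).congr_deriv ?_
  push_cast
  ring

lemma neg_phiPlus_uPlus {lam t : ℝ} (hlam : -1 ≤ lam) (ht : 0 ≤ t) :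
    -phiPlus (uPlus t lam) =
      2 * exp t ^ 2 * lam + 2 * (2 * exp t ^ 2 - exp t) * (√(1 + lam) + 1) := by
  rw [phiPlus, sqrt_one_add_uPlus hlam ht, uPlus_eq]
  ring

theorem stmt19 :
    ∀ lam : ℝ, 0 ≤ lam →
      uPlus 0 lam = lam ∧
      (∀ t : ℝ, 0 ≤ t → 0 ≤ uPlus t lam) ∧
      (∀ t : ℝ, 0 ≤ t →
        HasDerivAt (fun s => uPlus s lam) (-phiPlus (uPlus t lam)) t) ∧
      (∀ t : ℝ, 0 ≤ t →
        Real.sqrt (1 + uPlus t lam) = Real.exp t * Real.sqrt (1 + lam) + Real.exp t - 1) := by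
  intro lam hlam
  have hlam₁ : -1 ≤ lam := by linarith
  refine ⟨uPlus_zero_left lam, fun t ht => uPlus_nonneg hlam ht, fun t ht => ?_,
    fun t ht => sqrt_one_add_uPlus hlam₁ ht⟩
  rw [neg_phiPlus_uPlus hlam₁ ht]
  exact hasDerivAt_uPlus t lam
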